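/- Let α > 1, σ > 0, and for q ∈ [0,1] define F(q) = Ψ_α((1−q)·N(0,σ²) + q·N(1,σ²) ‖ N(0,σ²)), where Ψ_α(P‖Q) = ∫ p^α q^{1−α}. Then F is monotonically nondecreasing in q on [0,1], and F(0) = 1. -/

import Mathlib

/-- Gaussian density on ℝ with mean `μ` and variance `σ²`. -/
noncomputable def gaussDens (μ σ : ℝ) (x : ℝ) : ℝ :=
  (σ * Real.sqrt (2 * Real.pi))⁻¹ * Real.exp (-(x - μ) ^ 2 / (2 * σ ^ 2))

/-- `F(q) = Ψ_α((1−q)N(0,σ²) + qN(1,σ²) ‖ N(0,σ²))`. -/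
noncomputable def mixturePsi (α σ q : ℝ) : ℝ :=
  ∫ x : ℝ, ((1 - q) * gaussDens 0 σ x + q * gaussDens 1 σ x) ^ α
    * (gaussDens 0 σ x) ^ (1 - α)

/-!
Write `p` for the density of `N(0,σ²)` and `r` for that of `N(1,σ²)`. For each `x` the integrand
`((1 - q) p + q r) ^ α * p ^ (1 - α)` is a convex function of `q` (as `t ↦ t ^ α` is convex for
`α ≥ 1`), so `F` is convex on `[0,1]`. Bernoulli's inequality bounds the integrand below by
`p + α ((1 - q) p + q r - p)`, whose integral is `1` because `p` and `r` are both probability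
densities; hence `F ≥ 1 = F(0)`. A convex function on an interval that is minimal at the left
endpoint is nondecreasing. The only Gaussian input is integrability of `r ^ α * p ^ (1 - α)`, which
is a multiple of the density of `N(α,σ²)`.
-/

open Real MeasureTheory Set

lemma rpow_mul_rpow_one_sub_self {c : ℝ} (hc : 0 < c) (α : ℝ) : c ^ α * c ^ (1 - α) = c := by
  rw [← rpow_add hc, add_sub_cancel, rpow_one]

/-- Bernoulli's inequality, in the form of the tangent line of `m ↦ m ^ α * c ^ (1 - α)` at `c`. -/
lemma add_mul_sub_le_rpow_mul_rpow {α c m : ℝ} (hα : 1 ≤ α) (hc : 0 < c) (hm : 0 ≤ m) :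
    c + α * (m - c) ≤ m ^ α * c ^ (1 - α) := by
  have hb := one_add_mul_self_le_rpow_one_add (s := m / c - 1)
    (by linarith [div_nonneg hm hc.le]) hα
  rw [add_sub_cancel] at hb
  calc c + α * (m - c) = (1 + α * (m / c - 1)) * c := by field_simp
    _ ≤ (m / c) ^ α * c := mul_le_mul_of_nonneg_right hb hc.le
    _ = m ^ α * c ^ (1 - α) := by
      rw [div_rpow hm hc.le, rpow_sub hc, rpow_one]
      field_simp

lemma one_sub_mul_add_mul_nonneg {q a b : ℝ} (hq : q ∈ Icc 0 1) (ha : 0 ≤ a) (hb : 0 ≤ b) :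
    0 ≤ (1 - q) * a + q * b :=
  add_nonneg (mul_nonneg (sub_nonneg.2 hq.2) ha) (mul_nonneg hq.1 hb)

lemma convexOn_mix_rpow_mul_rpow {α a b c : ℝ} (hα : 1 ≤ α) (ha : 0 ≤ a) (hb : 0 ≤ b)
    (hc : 0 ≤ c) : ConvexOn ℝ (Icc 0 1) fun q => ((1 - q) * a + q * b) ^ α * c ^ (1 - α) := by
  have hmix : Icc (0 : ℝ) 1 ⊆ AffineMap.lineMap a b ⁻¹' Ici 0 := fun q hq => by
    simpa only [mem_preimage, AffineMap.lineMap_apply_ring, mem_Ici]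
      using one_sub_mul_add_mul_nonneg hq ha hb
  have h := ((convexOn_rpow hα).comp_affineMap (AffineMap.lineMap a b)).subset hmix (convex_Icc 0 1)
  simpa only [Function.comp_def, AffineMap.lineMap_apply_ring, smul_eq_mul, mul_comm]
    using h.smul (rpow_nonneg hc (1 - α))

lemma convexOn_integral {X E : Type*} [MeasurableSpace X] {μ : Measure X} [AddCommGroup E]
    [Module ℝ E] {s : Set E} {f : E → X → ℝ} (hs : Convex ℝ s) (hf : ∀ x, ConvexOn ℝ s (f · x))
    (hint : ∀ t ∈ s, Integrable (f t) μ) : ConvexOn ℝ s fun t => ∫ x, f t x ∂μ := by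
  refine ⟨hs, fun a ha b hb θ η hθ hη hθη => ?_⟩
  calc ∫ x, f (θ • a + η • b) x ∂μ ≤ ∫ x, (θ * f a x + η * f b x) ∂μ :=
        integral_mono (hint _ (hs ha hb hθ hη hθη))
          (((hint a ha).const_mul θ).add ((hint b hb).const_mul η))
          fun x => (hf x).2 ha hb hθ hη hθη
    _ = θ • ∫ x, f a x ∂μ + η • ∫ x, f b x ∂μ := by
      rw [integral_add ((hint a ha).const_mul θ) ((hint b hb).const_mul η),
        integral_const_mul, integral_const_mul, smul_eq_mul, smul_eq_mul]

lemma monotoneOn_of_convexOn_Icc_of_le {f : ℝ → ℝ} {a b : ℝ} (hf : ConvexOn ℝ (Icc a b) f)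
    (hmin : ∀ x ∈ Icc a b, f a ≤ f x) : MonotoneOn f (Icc a b) := by
  intro x hx y hy hxy
  rcases hx.1.eq_or_lt with rfl | hax
  · exact hmin y hy
  · exact hf.le_right_of_left_le'' (left_mem_Icc.2 (hx.1.trans hx.2)) hy hax hxy (hmin x hx)

section Mixture

variable {X : Type*} [MeasurableSpace X] {μ : Measure X} {α : ℝ} {p r : X → ℝ}

lemma integrable_mix_rpow_mul_rpow (hα : 1 ≤ α) (hp : ∀ x, 0 < p x) (hr : ∀ x, 0 ≤ r x)
    (hpi : Integrable p μ) (hrm : AEStronglyMeasurable r μ)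
    (hrp : Integrable (fun x => r x ^ α * p x ^ (1 - α)) μ) {q : ℝ} (hq : q ∈ Icc 0 1) :
    Integrable (fun x => ((1 - q) * p x + q * r x) ^ α * p x ^ (1 - α)) μ := by
  refine ((hpi.const_mul (1 - q)).add (hrp.const_mul q)).mono ?_ ?_
  · have hpm := hpi.aestronglyMeasurable.aemeasurable
    exact ((((hpm.const_mul _).add (hrm.aemeasurable.const_mul _)).pow_const α).mul
      (hpm.pow_const _)).aestronglyMeasurable
  · refine ae_of_all _ fun x => ?_
    -- convexity between the endpoints `q = 0` and `q = 1` gives the integrable majorant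
    have hconv := (convexOn_mix_rpow_mul_rpow hα (hp x).le (hr x) (hp x).le).2
      (left_mem_Icc.2 zero_le_one) (right_mem_Icc.2 zero_le_one) (sub_nonneg.2 hq.2) hq.1
      (sub_add_cancel 1 q)
    simp only [smul_eq_mul, mul_zero, mul_one, sub_zero, sub_self, zero_mul, add_zero,
      zero_add, one_mul, rpow_mul_rpow_one_sub_self (hp x)] at hconv
    have hm := one_sub_mul_add_mul_nonneg hq (hp x).le (hr x)
    rw [Real.norm_of_nonneg (mul_nonneg (rpow_nonneg hm _) (rpow_nonneg (hp x).le _))]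
    exact hconv.trans (Real.le_norm_self _)

lemma integral_le_integral_rpow_mul_rpow {m : X → ℝ} (hα : 1 ≤ α) (hp : ∀ x, 0 < p x)
    (hm : ∀ x, 0 ≤ m x) (hpi : Integrable p μ) (hmi : Integrable m μ)
    (hmp : Integrable (fun x => m x ^ α * p x ^ (1 - α)) μ) (hmass : ∫ x, m x ∂μ = ∫ x, p x ∂μ) :
    ∫ x, p x ∂μ ≤ ∫ x, m x ^ α * p x ^ (1 - α) ∂μ := by
  have hlin : Integrable (fun x => α * (m x - p x)) μ := (hmi.sub hpi).const_mul α
  calc ∫ x, p x ∂μ = ∫ x, (p x + α * (m x - p x)) ∂μ := by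
        rw [integral_add hpi hlin, integral_const_mul, integral_sub hmi hpi, hmass, sub_self,
          mul_zero, add_zero]
    _ ≤ ∫ x, m x ^ α * p x ^ (1 - α) ∂μ :=
        integral_mono (hpi.add hlin) hmp fun x => add_mul_sub_le_rpow_mul_rpow hα (hp x) (hm x)

lemma monotoneOn_integral_mix_rpow_mul_rpow (hα : 1 ≤ α) (hp : ∀ x, 0 < p x)
    (hr : ∀ x, 0 ≤ r x) (hpi : Integrable p μ) (hri : Integrable r μ)
    (hrp : Integrable (fun x => r x ^ α * p x ^ (1 - α)) μ) (hmass : ∫ x, r x ∂μ = ∫ x, p x ∂μ) :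
    MonotoneOn (fun q => ∫ x, ((1 - q) * p x + q * r x) ^ α * p x ^ (1 - α) ∂μ) (Icc 0 1) := by
  have hint := fun q (hq : q ∈ Icc (0 : ℝ) 1) =>
    integrable_mix_rpow_mul_rpow hα hp hr hpi hri.aestronglyMeasurable hrp hq
  refine monotoneOn_of_convexOn_Icc_of_le (convexOn_integral (convex_Icc 0 1)
    (fun x => convexOn_mix_rpow_mul_rpow hα (hp x).le (hr x) (hp x).le) hint) fun q hq => ?_
  have hmi : Integrable (fun x => (1 - q) * p x + q * r x) μ :=
    (hpi.const_mul _).add (hri.const_mul _)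
  have hmmass : ∫ x, ((1 - q) * p x + q * r x) ∂μ = ∫ x, p x ∂μ := by
    rw [integral_add (hpi.const_mul _) (hri.const_mul _), integral_const_mul, integral_const_mul,
      hmass]
    ring
  simp only [sub_zero, zero_mul, add_zero, one_mul, rpow_mul_rpow_one_sub_self (hp _)]
  exact integral_le_integral_rpow_mul_rpow hα hp
    (fun x => one_sub_mul_add_mul_nonneg hq (hp x).le (hr x))
    hpi hmi (hint q hq) hmmass

end Mixture

section Gaussian

variable {σ : ℝ}

lemma gaussDens_pos (hσ : 0 < σ) (μ x : ℝ) : 0 < gaussDens μ σ x := by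
  unfold gaussDens
  positivity

lemma gaussDens_eq_gaussianPDFReal (hσ : 0 < σ) (μ : ℝ) :
    gaussDens μ σ = ProbabilityTheory.gaussianPDFReal μ (σ ^ 2).toNNReal := by
  ext x
  rw [ProbabilityTheory.gaussianPDFReal_def, gaussDens, Real.coe_toNNReal _ (sq_nonneg σ),
    mul_comm (2 * π), sqrt_mul (sq_nonneg σ), sqrt_sq hσ.le]

lemma integrable_gaussDens (hσ : 0 < σ) (μ : ℝ) : Integrable (gaussDens μ σ) := by
  rw [gaussDens_eq_gaussianPDFReal hσ]
  exact ProbabilityTheory.integrable_gaussianPDFReal μ _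

lemma integral_gaussDens (hσ : 0 < σ) (μ : ℝ) : ∫ x, gaussDens μ σ x = 1 := by
  rw [gaussDens_eq_gaussianPDFReal hσ]
  exact ProbabilityTheory.integral_gaussianPDFReal_eq_one μ
    (Real.toNNReal_pos.2 (pow_pos hσ 2)).ne'

/-- Completing the square in the exponent. -/
lemma gaussDens_rpow_mul_rpow (hσ : 0 < σ) (β μ ν x : ℝ) :
    gaussDens μ σ x ^ β * gaussDens ν σ x ^ (1 - β) =
      exp (((β * μ + (1 - β) * ν) ^ 2 - β * μ ^ 2 - (1 - β) * ν ^ 2) / (2 * σ ^ 2))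
        * gaussDens (β * μ + (1 - β) * ν) σ x := by
  have hA : 0 < (σ * sqrt (2 * π))⁻¹ := by positivity
  rw [rpow_def_of_pos (gaussDens_pos hσ μ x), rpow_def_of_pos (gaussDens_pos hσ ν x), gaussDens,
    gaussDens, gaussDens, log_mul hA.ne' (exp_pos _).ne', log_mul hA.ne' (exp_pos _).ne',
    log_exp, log_exp, ← exp_add]
  conv_rhs => rw [← exp_log hA, ← exp_add, ← exp_add]
  congr 1
  field_simp
  ring

lemma integrable_gaussDens_rpow_mul_rpow (hσ : 0 < σ) (β μ ν : ℝ) :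
    Integrable (fun x => gaussDens μ σ x ^ β * gaussDens ν σ x ^ (1 - β)) := by
  simp only [gaussDens_rpow_mul_rpow hσ]
  exact (integrable_gaussDens hσ _).const_mul _

end Gaussian

/-- `F` is nondecreasing in `q` on `[0,1]` and `F(0) = 1`. -/
theorem mixturePsi_monotone_and_one (α σ : ℝ) (hα : 1 < α) (hσ : 0 < σ) :
    (∀ q q' : ℝ, 0 ≤ q → q ≤ q' → q' ≤ 1 → mixturePsi α σ q ≤ mixturePsi α σ q')
    ∧ mixturePsi α σ 0 = 1 := by
  have hmono : MonotoneOn (mixturePsi α σ) (Icc 0 1) :=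
    monotoneOn_integral_mix_rpow_mul_rpow hα.le (gaussDens_pos hσ 0)
      (fun x => (gaussDens_pos hσ 1 x).le) (integrable_gaussDens hσ 0) (integrable_gaussDens hσ 1)
      (integrable_gaussDens_rpow_mul_rpow hσ α 1 0)
      (by rw [integral_gaussDens hσ, integral_gaussDens hσ])
  refine ⟨fun q q' hq hqq' hq' => hmono ⟨hq, hqq'.trans hq'⟩ ⟨hq.trans hqq', hq'⟩ hqq', ?_⟩
  simp only [mixturePsi, sub_zero, one_mul, zero_mul, add_zero,
    rpow_mul_rpow_one_sub_self (gaussDens_pos hσ 0 _)]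
  exact integral_gaussDens hσ 0
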